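/- Let ν > 0 and let g : ℝ → ℝ be continuous with compact support. Define θ₀(y) = exp(−(1/(2ν)) ∫₀^y g(s) ds) and, for x ∈ ℝ and t > 0, u(x,t) = [∫_{-∞}^{∞} ((x−y)/t) e^{−(x−y)²/(4νt)} θ₀(y) dy] / [∫_{-∞}^{∞} e^{−(x−y)²/(4νt)} θ₀(y) dy]. Then for every x ∈ ℝ, u(x,t) → g(x) as t → 0⁺; that is, the Hopf–Cole formula attains the initial condition u(x,0) = g(x). -/

import Mathlib

open Set MeasureTheory Real Filter
open scoped Topology

/-!
Since `θ₀' = -g θ₀ / (2ν)`, an integration by parts against the heat kernel turns the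
numerator of the Hopf–Cole formula into the heat-kernel average of `g θ₀`, so `u(x,t)` is a
ratio of two such averages. The substitution `y = x - √t z` makes both of them integrals
against the fixed Gaussian `exp (-z² / 4ν)` of bounded continuous functions evaluated at
`x - √t z`; by dominated convergence they tend to `(∫ exp (-z² / 4ν)) g(x) θ₀(x)` and
`(∫ exp (-z² / 4ν)) θ₀(x)`, whose ratio is `g(x)`.
-/

theorem norm_intervalIntegral_le_integral_norm {E : Type*} [NormedAddCommGroup E]
    [NormedSpace ℝ E] {f : ℝ → E} (hf : Integrable f) (a b : ℝ) :
    ‖∫ s in a..b, f s‖ ≤ ∫ s, ‖f s‖ :=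
  intervalIntegral.norm_integral_le_integral_norm_uIoc.trans
    (setIntegral_le_integral hf.norm (ae_of_all _ fun _ => norm_nonneg _))

section GaussianKernel

variable {c : ℝ}

theorem integrable_exp_neg_sq_div (hc : 0 < c) : Integrable (fun z => exp (-z ^ 2 / c)) :=
  (integrable_exp_neg_mul_sq (inv_pos.2 hc)).congr (ae_of_all _ fun z => by ring_nf)

theorem integrable_exp_neg_sub_sq_div_mul (hc : 0 < c) (x : ℝ) {φ : ℝ → ℝ}
    (hφ : AEStronglyMeasurable φ) {C : ℝ} (hC : ∀ y, |φ y| ≤ C) :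
    Integrable (fun y => exp (-(x - y) ^ 2 / c) * φ y) :=
  ((integrable_exp_neg_sq_div hc).comp_sub_left x).mul_bdd hφ (ae_of_all _ hC)

theorem integrable_sub_mul_exp_neg_sub_sq_div_mul (hc : 0 < c) (x : ℝ) {φ : ℝ → ℝ}
    (hφ : AEStronglyMeasurable φ) {C : ℝ} (hC : ∀ y, |φ y| ≤ C) :
    Integrable (fun y => (x - y) * exp (-(x - y) ^ 2 / c) * φ y) := by
  have hexp : Integrable (fun y => (x - y) * exp (-(x - y) ^ 2 / c)) := by
    refine ((integrable_mul_exp_neg_mul_sq (inv_pos.2 hc)).comp_sub_left x).congr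
      (ae_of_all _ fun y => ?_)
    ring_nf
  exact hexp.mul_bdd hφ (ae_of_all _ hC)

theorem hasDerivAt_exp_neg_sub_sq_div (c x y : ℝ) :
    HasDerivAt (fun y => exp (-(x - y) ^ 2 / c)) (2 / c * (x - y) * exp (-(x - y) ^ 2 / c)) y := by
  have h : HasDerivAt (fun y => -(x - y) ^ 2 / c) (2 / c * (x - y)) y := by
    refine ((((hasDerivAt_id' y).const_sub x).fun_pow 2).fun_neg.div_const c).congr_deriv ?_
    ring
  convert h.exp using 1
  ring

theorem integral_sub_mul_exp_neg_sub_sq_div_mul (hc : 0 < c) (x : ℝ) {θ θ' : ℝ → ℝ}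
    (hθ : ∀ y, HasDerivAt θ (θ' y) y) (hθ' : Continuous θ') {C D : ℝ}
    (hC : ∀ y, |θ y| ≤ C) (hD : ∀ y, |θ' y| ≤ D) :
    ∫ y, (x - y) * exp (-(x - y) ^ 2 / c) * θ y
      = -(c / 2) * ∫ y, exp (-(x - y) ^ 2 / c) * θ' y := by
  have hθc : Continuous θ := continuous_iff_continuousAt.2 fun y => (hθ y).continuousAt
  have hibp := integral_mul_deriv_eq_deriv_mul_of_integrable (u := θ) (u' := θ')
    (fun y _ => hθ y) (fun y _ => hasDerivAt_exp_neg_sub_sq_div c x y)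
    (((integrable_sub_mul_exp_neg_sub_sq_div_mul hc x hθc.aestronglyMeasurable hC).const_mul
      (2 / c)).congr (ae_of_all _ fun y => by simp only [Pi.mul_apply]; ring))
    ((integrable_exp_neg_sub_sq_div_mul hc x hθ'.aestronglyMeasurable hD).congr
      (ae_of_all _ fun y => by simp only [Pi.mul_apply]; ring))
    ((integrable_exp_neg_sub_sq_div_mul hc x hθc.aestronglyMeasurable hC).congr
      (ae_of_all _ fun y => by simp only [Pi.mul_apply]; ring))
  have hlhs : ∫ y, θ y * (2 / c * (x - y) * exp (-(x - y) ^ 2 / c))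
      = 2 / c * ∫ y, (x - y) * exp (-(x - y) ^ 2 / c) * θ y := by
    rw [← integral_const_mul]
    congr 1 with y
    ring
  have hrhs : ∫ y, θ' y * exp (-(x - y) ^ 2 / c) = ∫ y, exp (-(x - y) ^ 2 / c) * θ' y := by
    simp only [mul_comm]
  rw [hlhs, hrhs] at hibp
  calc ∫ y, (x - y) * exp (-(x - y) ^ 2 / c) * θ y
      = c / 2 * (2 / c * ∫ y, (x - y) * exp (-(x - y) ^ 2 / c) * θ y) := by field_simp
    _ = -(c / 2) * ∫ y, exp (-(x - y) ^ 2 / c) * θ' y := by rw [hibp]; ring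

theorem integral_exp_neg_sub_sq_div_mul_eq {t : ℝ} (ht : 0 < t) (x : ℝ) (φ : ℝ → ℝ) :
    ∫ y, exp (-(x - y) ^ 2 / (c * t)) * φ y
      = √t * ∫ z, exp (-z ^ 2 / c) * φ (x - √t * z) := by
  set Ψ : ℝ → ℝ := fun w => exp (-w ^ 2 / (c * t)) * φ (x - w)
  have hs : 0 < √t := sqrt_pos.2 ht
  have hscale : ∫ z, Ψ (√t * z) = (√t)⁻¹ * ∫ w, Ψ w := by
    rw [Measure.integral_comp_mul_left, abs_of_pos (inv_pos.2 hs), smul_eq_mul]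
  calc ∫ y, exp (-(x - y) ^ 2 / (c * t)) * φ y
      = ∫ y, Ψ (x - y) := by simp only [Ψ, sub_sub_cancel]
    _ = ∫ w, Ψ w := integral_sub_left_eq_self Ψ volume x
    _ = √t * ∫ z, Ψ (√t * z) := by rw [hscale, mul_inv_cancel_left₀ hs.ne']
    _ = √t * ∫ z, exp (-z ^ 2 / c) * φ (x - √t * z) := by
      congr 2 with z
      simp only [Ψ, mul_pow, sq_sqrt ht.le]
      congr 2
      field_simp

end GaussianKernel

theorem tendsto_integral_mul_comp_sub_mul {k φ : ℝ → ℝ} (hk : Integrable k)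
    (hφ : Continuous φ) {C : ℝ} (hC : ∀ y, |φ y| ≤ C) (x : ℝ) :
    Tendsto (fun s => ∫ z, k z * φ (x - s * z)) (𝓝 0) (𝓝 ((∫ z, k z) * φ x)) := by
  rw [← integral_mul_const]
  refine tendsto_integral_filter_of_dominated_convergence (fun z => |k z| * C)
    (Eventually.of_forall fun s => hk.aestronglyMeasurable.mul
      (hφ.comp (by fun_prop)).aestronglyMeasurable)
    (Eventually.of_forall fun s => ae_of_all _ fun z => ?_) (hk.abs.mul_const C)
    (ae_of_all _ fun z => ?_)
  · rw [norm_mul, Real.norm_eq_abs, Real.norm_eq_abs]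
    exact mul_le_mul_of_nonneg_left (hC _) (abs_nonneg _)
  · have hlim : Tendsto (fun s : ℝ => x - s * z) (𝓝 0) (𝓝 x) := by
      simpa using (tendsto_const_nhds (x := x)).sub ((tendsto_id (x := 𝓝 (0 : ℝ))).mul_const z)
    exact ((hφ.tendsto x).comp hlim).const_mul _

section HopfCole

variable (ν : ℝ) (g : ℝ → ℝ)

noncomputable def hopfColeTransform (y : ℝ) : ℝ :=
  exp (-(1 / (2 * ν)) * ∫ s in (0:ℝ)..y, g s)

theorem hopfColeTransform_pos (y : ℝ) : 0 < hopfColeTransform ν g y := exp_pos _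

variable {ν g}

theorem hasDerivAt_hopfColeTransform (hg : Continuous g) (y : ℝ) :
    HasDerivAt (hopfColeTransform ν g) (-(1 / (2 * ν)) * g y * hopfColeTransform ν g y) y := by
  have hprim : HasDerivAt (fun y => ∫ s in (0:ℝ)..y, g s) (g y) y :=
    intervalIntegral.integral_hasDerivAt_right (hg.intervalIntegrable _ _)
      hg.stronglyMeasurable.stronglyMeasurableAtFilter hg.continuousAt
  exact ((hprim.const_mul _).exp).congr_deriv (by rw [hopfColeTransform]; ring)

theorem continuous_hopfColeTransform (hg : Continuous g) : Continuous (hopfColeTransform ν g) :=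
  continuous_iff_continuousAt.2 fun y => (hasDerivAt_hopfColeTransform hg y).continuousAt

theorem abs_hopfColeTransform_le (hg : Integrable g) (y : ℝ) :
    |hopfColeTransform ν g y| ≤ exp (|1 / (2 * ν)| * ∫ s, |g s|) := by
  rw [hopfColeTransform, abs_of_pos (exp_pos _), exp_le_exp]
  calc -(1 / (2 * ν)) * ∫ s in (0:ℝ)..y, g s
      ≤ |1 / (2 * ν)| * |∫ s in (0:ℝ)..y, g s| := by
        rw [← abs_neg (1 / (2 * ν)), ← abs_mul]; exact le_abs_self _
    _ ≤ |1 / (2 * ν)| * ∫ s, |g s| := by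
        gcongr; exact norm_intervalIntegral_le_integral_norm hg 0 y

/-- Integration by parts, using `θ' = -g θ / (2ν)`. -/
theorem integral_sub_div_mul_exp_mul_hopfColeTransform (hν : 0 < ν) (hg : Continuous g)
    {Cg : ℝ} (hCg : ∀ y, |g y| ≤ Cg) (hgi : Integrable g) {t : ℝ} (ht : 0 < t) (x : ℝ) :
    ∫ y, ((x - y) / t) * exp (-(x - y) ^ 2 / (4 * ν * t)) * hopfColeTransform ν g y
      = ∫ y, exp (-(x - y) ^ 2 / (4 * ν * t)) * (g y * hopfColeTransform ν g y) := by
  set θ := hopfColeTransform ν g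
  set C := exp (|1 / (2 * ν)| * ∫ s, |g s|)
  have hθ' : ∀ y, |-(1 / (2 * ν)) * g y * θ y| ≤ |1 / (2 * ν)| * Cg * C := fun y => by
    rw [abs_mul, abs_mul, abs_neg]
    have := (abs_nonneg _).trans (hCg 0)
    gcongr
    · exact hCg y
    · exact abs_hopfColeTransform_le hgi y
  have hibp := integral_sub_mul_exp_neg_sub_sq_div_mul (c := 4 * ν * t) (by positivity) x
    (hasDerivAt_hopfColeTransform hg)
    ((continuous_const.mul hg).mul (continuous_hopfColeTransform hg))
    (abs_hopfColeTransform_le hgi) hθ'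
  have hconst : ∫ y, exp (-(x - y) ^ 2 / (4 * ν * t)) * (-(1 / (2 * ν)) * g y * θ y)
      = -(1 / (2 * ν)) * ∫ y, exp (-(x - y) ^ 2 / (4 * ν * t)) * (g y * θ y) := by
    rw [← integral_const_mul]; congr 1 with y; ring
  calc ∫ y, ((x - y) / t) * exp (-(x - y) ^ 2 / (4 * ν * t)) * θ y
      = t⁻¹ * ∫ y, (x - y) * exp (-(x - y) ^ 2 / (4 * ν * t)) * θ y := by
        rw [← integral_const_mul]; congr 1 with y; ring
    _ = t⁻¹ * (-(4 * ν * t / 2)) * (-(1 / (2 * ν)))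
          * ∫ y, exp (-(x - y) ^ 2 / (4 * ν * t)) * (g y * θ y) := by
        rw [hibp, hconst]; ring
    _ = ∫ y, exp (-(x - y) ^ 2 / (4 * ν * t)) * (g y * θ y) := by
        rw [show t⁻¹ * (-(4 * ν * t / 2)) * (-(1 / (2 * ν))) = 1 by field_simp; ring, one_mul]

end HopfCole

/-- **The Hopf–Cole formula attains the initial condition.** For `ν > 0` and `g` continuous
with compact support, the Hopf–Cole solution `u(x,t)` tends to `g(x)` as `t → 0⁺`,
for every `x ∈ ℝ`. -/
theorem hopf_cole_solution_initial_condition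
    (ν : ℝ) (hν : 0 < ν)
    (g : ℝ → ℝ) (hcont : Continuous g) (hsupp : HasCompactSupport g)
    (θ₀ : ℝ → ℝ)
    (hθ₀ : ∀ y : ℝ, θ₀ y = Real.exp (-(1 / (2 * ν)) * ∫ s in (0:ℝ)..y, g s))
    (u : ℝ → ℝ → ℝ)
    (hu : ∀ x t : ℝ, 0 < t →
      u x t = (∫ y : ℝ, ((x - y) / t) * Real.exp (-(x - y) ^ 2 / (4 * ν * t)) * θ₀ y) /
              (∫ y : ℝ, Real.exp (-(x - y) ^ 2 / (4 * ν * t)) * θ₀ y)) :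
    ∀ x : ℝ, Tendsto (fun t => u x t) (nhdsWithin 0 (Ioi 0)) (nhds (g x)) := by
  intro x
  obtain rfl : θ₀ = hopfColeTransform ν g := funext hθ₀
  set θ := hopfColeTransform ν g
  have hgi : Integrable g := hcont.integrable_of_hasCompactSupport hsupp
  obtain ⟨Cg, hCg⟩ := hsupp.exists_bound_of_continuous hcont
  have hθ := abs_hopfColeTransform_le (ν := ν) hgi
  have hgθ : ∀ y, |g y * θ y| ≤ Cg * exp (|1 / (2 * ν)| * ∫ s, |g s|) := fun y => by
    rw [abs_mul]
    exact mul_le_mul (hCg y) (hθ y) (abs_nonneg _) ((norm_nonneg _).trans (hCg 0))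
  set G : ℝ → ℝ := fun z => exp (-z ^ 2 / (4 * ν))
  have hG : Integrable G := integrable_exp_neg_sq_div (by positivity)
  have hrescale : ∀ t > 0, u x t = (∫ z, G z * (g (x - √t * z) * θ (x - √t * z)))
      / ∫ z, G z * θ (x - √t * z) := fun t ht => by
    rw [hu x t ht, integral_sub_div_mul_exp_mul_hopfColeTransform hν hcont hCg hgi ht,
      integral_exp_neg_sub_sq_div_mul_eq ht, integral_exp_neg_sub_sq_div_mul_eq ht,
      mul_div_mul_left _ _ (sqrt_pos.2 ht).ne']
  have hsqrt : Tendsto (fun t => √t) (𝓝[>] 0) (𝓝 0) := by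
    simpa using continuous_sqrt.continuousWithinAt.tendsto (x := 0) (s := Ioi 0)
  have hθc := continuous_hopfColeTransform (ν := ν) hcont
  have hGpos : 0 < ∫ z, G z := integral_exp_pos hG
  have hθx := hopfColeTransform_pos ν g x
  have hA := tendsto_integral_mul_comp_sub_mul hG (φ := fun y => g y * θ y)
    (hcont.mul hθc) hgθ x
  have hB := tendsto_integral_mul_comp_sub_mul hG hθc hθ x
  have hlim := (hA.div hB (mul_pos hGpos hθx).ne').comp hsqrt
  rw [mul_div_mul_left _ _ hGpos.ne', mul_div_cancel_right₀ _ hθx.ne'] at hlim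
  exact hlim.congr' (eventually_nhdsWithin_of_forall fun t ht => (hrescale t ht).symm)
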